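/- arXiv:1712.06099 — 2 statements merged into one kernel-verified Lean document; each statement's English description precedes it below -/
import Mathlib

section
/- For every integer n ≥ 3, the Boolean dimension of the Kelly poset K_n is at most 4. -/
/-- A linear order on the ground set `α` (not necessarily an extension of the partial order). -/
structure LinOrdOn (α : Type*) where
  rel : α → α → Prop
  refl : ∀ x, rel x x
  antisymm : ∀ x y, rel x y → rel y x → x = y
  trans : ∀ x y z, rel x y → rel y z → rel x z
  total : ∀ x y, rel x y ∨ rel y x

/-- `(𝓑, τ)` is a Boolean realizer: for distinct `x, y`, `x < y` in the poset iff `τ`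
evaluates to true on the bit string whose `i`-th coordinate records whether `x < y`
in the linear order `B i`. -/
def IsBooleanRealizer {α : Type*} [PartialOrder α] {d : ℕ}
    (B : Fin d → LinOrdOn α) (τ : (Fin d → Prop) → Prop) : Prop :=
  ∀ x y : α, x ≠ y → (x < y ↔ τ (fun i => (B i).rel x y ∧ x ≠ y))

/-- The Boolean dimension. -/
noncomputable def boolDim (α : Type*) [PartialOrder α] : ℕ :=
  sInf {d : ℕ | 0 < d ∧ ∃ B : Fin d → LinOrdOn α, ∃ τ : (Fin d → Prop) → Prop,
    IsBooleanRealizer B τ}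


/-- The elements of the Kelly poset `K n`:
`a 1, …, a n`, `b 1, …, b n`, `w 1, …, w (n-1)`, `z 1, …, z (n-1)`. -/
inductive KElt (n : ℕ) : Type
  | a : Fin n → KElt n
  | b : Fin n → KElt n
  | w : Fin (n - 1) → KElt n
  | z : Fin (n - 1) → KElt n

namespace KElt

/-- Inclusion `Fin (n-1) → Fin n` keeping the value. -/
def lo {n : ℕ} (i : Fin (n - 1)) : Fin n := ⟨i.val, by have := i.isLt; omega⟩

/-- The map `Fin (n-1) → Fin n` sending `i` to `i + 1`. -/
def hi {n : ℕ} (i : Fin (n - 1)) : Fin n := ⟨i.val + 1, by have := i.isLt; omega⟩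

/-- The defining relations (cover relations) of the Kelly poset, with indices written
0-based: `aᵢ < wᵢ`, `wᵢ < bᵢ₊₁`, `wᵢ < wᵢ₊₁`, `aᵢ₊₁ < zᵢ`, `zᵢ < bᵢ`, `zᵢ₊₁ < zᵢ`. -/
inductive kcov {n : ℕ} : KElt n → KElt n → Prop
  | aw (i : Fin (n - 1)) : kcov (.a (lo i)) (.w i)
  | wb (i : Fin (n - 1)) : kcov (.w i) (.b (hi i))
  | ww (i j : Fin (n - 1)) : j.val = i.val + 1 → kcov (.w i) (.w j)
  | az (i : Fin (n - 1)) : kcov (.a (hi i)) (.z i)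
  | zb (i : Fin (n - 1)) : kcov (.z i) (.b (lo i))
  | zz (i j : Fin (n - 1)) : j.val = i.val + 1 → kcov (.z j) (.z i)

/-- A measure that strictly increases along the defining relations. -/
def kmeas {n : ℕ} : KElt n → ℕ
  | .a _ => 0
  | .w i => i.val + 1
  | .z i => n - i.val
  | .b _ => n + 1

theorem kcov_meas {n : ℕ} {x y : KElt n} (h : kcov x y) : kmeas x < kmeas y := by
  cases h with
  | aw i => simp [kmeas]
  | wb i => have := i.isLt; simp [kmeas]; omega
  | ww i j h => have := i.isLt; simp [kmeas]; omega
  | az i => have := i.isLt; simp [kmeas]; omega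
  | zb i => have := i.isLt; simp [kmeas] <;> omega
  | zz i j h => have := i.isLt; have := j.isLt; simp [kmeas]; omega

theorem rtg_meas {n : ℕ} {x y : KElt n} (h : Relation.ReflTransGen kcov x y) :
    kmeas x ≤ kmeas y := by
  induction h with
  | refl => exact le_rfl
  | tail _ hc ih => exact le_trans ih (le_of_lt (kcov_meas hc))

/-- The Kelly poset: reflexive–transitive closure of the defining relations. -/
instance (n : ℕ) : PartialOrder (KElt n) where
  le := Relation.ReflTransGen kcov
  le_refl _ := Relation.ReflTransGen.refl
  le_trans _ _ _ := Relation.ReflTransGen.trans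
  le_antisymm := by
    intro x y hxy hyx
    rcases Relation.ReflTransGen.cases_head hxy with rfl | ⟨c, hc, hcy⟩
    · rfl
    · exfalso
      have h1 : kmeas x < kmeas c := kcov_meas hc
      have h2 : kmeas c ≤ kmeas y := rtg_meas hcy
      have h3 : kmeas y ≤ kmeas x := rtg_meas hyx
      omega

end KElt

/-!
Four linear orders, indices 0-based as in `KElt`:

* `L₀ : z₀ < ⋯ < z_{n-2} < b₀ < a₀ < w₀ < b₁ < a₁ < w₁ < ⋯ < b_{n-1} < a_{n-1}`,
* `L₁ : b_{n-1} < a_{n-1} < z_{n-2} < b_{n-2} < a_{n-2} < ⋯ < z₀ < b₀ < a₀ < w₀ < ⋯ < w_{n-2}`,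
* `L₂ : a₀ < ⋯ < a_{n-1} < w₀ < ⋯ < w_{n-2} < z_{n-2} < ⋯ < z₀ < b₀ < ⋯ < b_{n-1}`,
* `L₃ : w₀ < ⋯ < w_{n-2} < a_{n-1} < ⋯ < a₀ < b_{n-1} < ⋯ < b₀ < z_{n-2} < ⋯ < z₀`,

form a Boolean realizer of `K_n`. Every comparable pair `x < y` has `x` before `y` in `L₂`;
together with `L₃` this sorts the pair by the kinds of its two elements, and `L₀`, `L₁` then
compare their indices.
-/

theorem Fin.monotone_of_le_succ {α : Type*} [Preorder α] {m : ℕ} {f : Fin m → α}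
    (h : ∀ i j : Fin m, j.val = i.val + 1 → f i ≤ f j) : Monotone f := by
  cases m with
  | zero => exact fun i => i.elim0
  | succ m => exact Fin.monotone_iff_le_succ.2 fun i => h _ _ rfl

theorem Fin.antitone_of_succ_le {α : Type*} [Preorder α] {m : ℕ} {f : Fin m → α}
    (h : ∀ i j : Fin m, j.val = i.val + 1 → f j ≤ f i) : Antitone f := by
  cases m with
  | zero => exact fun i => i.elim0
  | succ m => exact Fin.antitone_iff_succ_le.2 fun i => h _ _ rfl

def LinOrdOn.ofInjective {α β : Type*} [LinearOrder β] (f : α → β) (hf : Function.Injective f) :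
    LinOrdOn α where
  rel x y := f x ≤ f y
  refl _ := le_rfl
  antisymm _ _ h₁ h₂ := hf (le_antisymm h₁ h₂)
  trans _ _ _ := le_trans
  total _ _ := le_total _ _

theorem boolDim_le_of_isBooleanRealizer {α : Type*} [PartialOrder α] {d : ℕ} (hd : 0 < d)
    {B : Fin d → LinOrdOn α} {τ : (Fin d → Prop) → Prop} (h : IsBooleanRealizer B τ) :
    boolDim α ≤ d :=
  Nat.sInf_le ⟨hd, B, τ, h⟩

namespace KElt

variable {n : ℕ}

def KellyLt : KElt n → KElt n → Prop
  | .a k, .w i => k.val ≤ i.val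
  | .a k, .z i => i.val < k.val
  | .a k, .b m => k ≠ m
  | .w i, .w j => i < j
  | .w i, .b m => i.val < m.val
  | .z i, .z j => j < i
  | .z i, .b m => m.val ≤ i.val
  | _, _ => False

theorem kcov.kellyLt {x y : KElt n} (h : kcov x y) : KellyLt x y := by
  cases h with
  | aw i => exact le_rfl
  | wb i => exact Nat.lt_succ_self _
  | ww i j h => exact Fin.lt_def.2 (by omega)
  | az i => exact Nat.lt_succ_self _
  | zb i => exact le_rfl
  | zz i j h => exact Fin.lt_def.2 (by omega)

theorem kellyLt_trans {x y z : KElt n} (hxy : KellyLt x y) (hyz : KellyLt y z) : KellyLt x z := by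
  cases x <;> cases y <;> cases z <;> simp_all only [KellyLt, Fin.lt_def, ne_eq, Fin.ext_iff] <;>
    omega

theorem kellyLt_irrefl (x : KElt n) : ¬KellyLt x x := by
  cases x <;> simp [KellyLt]

theorem kcov.le {x y : KElt n} (h : kcov x y) : x ≤ y :=
  Relation.ReflTransGen.single h

theorem w_monotone : Monotone (w : Fin (n - 1) → KElt n) :=
  Fin.monotone_of_le_succ fun i j h => (kcov.ww i j h).le

theorem z_antitone : Antitone (z : Fin (n - 1) → KElt n) :=
  Fin.antitone_of_succ_le fun i j h => (kcov.zz i j h).le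

theorem exists_lo_eq {k : Fin n} (hk : k.val < n - 1) : ∃ i : Fin (n - 1), lo i = k :=
  ⟨⟨k.val, hk⟩, rfl⟩

theorem exists_hi_eq {k : Fin n} (hk : 0 < k.val) : ∃ i : Fin (n - 1), hi i = k :=
  ⟨⟨k.val - 1, by omega⟩, Fin.ext (by simp only [hi]; omega)⟩

theorem a_le_w {k : Fin n} {i : Fin (n - 1)} (h : k.val ≤ i.val) : a k ≤ w i := by
  obtain ⟨j, rfl⟩ := exists_lo_eq (k := k) (by omega)
  exact (kcov.aw j).le.trans (w_monotone h)

theorem a_le_z {k : Fin n} {i : Fin (n - 1)} (h : i.val < k.val) : a k ≤ z i := by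
  obtain ⟨j, rfl⟩ := exists_hi_eq (k := k) (by omega)
  exact (kcov.az j).le.trans (z_antitone (Nat.le_of_lt_succ h))

theorem w_le_b {i : Fin (n - 1)} {m : Fin n} (h : i.val < m.val) : w i ≤ b m := by
  obtain ⟨j, rfl⟩ := exists_hi_eq (k := m) (by omega)
  exact (w_monotone (Nat.le_of_lt_succ h)).trans (kcov.wb j).le

theorem z_le_b {i : Fin (n - 1)} {m : Fin n} (h : m.val ≤ i.val) : z i ≤ b m := by
  obtain ⟨j, rfl⟩ := exists_lo_eq (k := m) (by omega)
  exact (z_antitone h).trans (kcov.zb j).le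

theorem a_le_b {k m : Fin n} (h : k ≠ m) : a k ≤ b m := by
  rcases Fin.lt_or_lt_of_ne h with hkm | hmk
  · have hk : k.val < n - 1 := by omega
    exact (a_le_w (i := ⟨k.val, hk⟩) le_rfl).trans (w_le_b hkm)
  · have hm : m.val < n - 1 := by omega
    exact (a_le_z (i := ⟨m.val, hm⟩) hmk).trans (z_le_b le_rfl)

theorem le_of_kellyLt {x y : KElt n} (h : KellyLt x y) : x ≤ y := by
  cases x <;> cases y <;> simp only [KellyLt] at h
  case a.w => exact a_le_w h
  case a.z => exact a_le_z h
  case a.b => exact a_le_b h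
  case w.w => exact w_monotone h.le
  case w.b => exact w_le_b h
  case z.z => exact z_antitone h.le
  case z.b => exact z_le_b h

theorem le_iff_eq_or_kellyLt {x y : KElt n} : x ≤ y ↔ x = y ∨ KellyLt x y := by
  refine ⟨fun h => ?_, fun h => h.elim (fun e => e.le) le_of_kellyLt⟩
  induction h with
  | refl => exact Or.inl rfl
  | tail _ hc ih =>
    rcases ih with rfl | hlt
    · exact Or.inr hc.kellyLt
    · exact Or.inr (kellyLt_trans hlt hc.kellyLt)

theorem lt_iff_kellyLt {x y : KElt n} : x < y ↔ KellyLt x y := by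
  rw [lt_iff_le_and_ne, le_iff_eq_or_kellyLt]
  refine ⟨fun ⟨h, hne⟩ => h.resolve_left hne, fun h => ⟨Or.inr h, ?_⟩⟩
  rintro rfl
  exact kellyLt_irrefl x h

/-- Positions in the linear orders `L₀, …, L₃`. -/
def kellyKey (n : ℕ) : Fin 4 → KElt n → ℕ
  | 0, .a k => 4 * k.val + 2 * n
  | 0, .w i => 4 * i.val + 2 * n + 1
  | 0, .b m => 4 * m.val + 2 * n - 2
  | 0, .z i => i.val
  | 1, .a k => 4 * (n - k.val)
  | 1, .b m => 4 * (n - m.val) - 2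
  | 1, .z i => 4 * (n - i.val) - 3
  | 1, .w i => 8 * n + i.val
  | 2, .a k => k.val
  | 2, .w i => n + i.val
  | 2, .z i => 3 * n - i.val
  | 2, .b m => 4 * n + m.val
  | 3, .w i => i.val
  | 3, .a k => 2 * n - k.val
  | 3, .b m => 4 * n - m.val
  | 3, .z i => 6 * n - i.val

theorem kellyKey_injective (t : Fin 4) : Function.Injective (kellyKey n t) := by
  rintro (k | k | k | k) (m | m | m | m) h <;> have := k.isLt <;> have := m.isLt <;>
    fin_cases t <;> simp_all only [kellyKey, Fin.ext_iff, reduceCtorEq, a.injEq, b.injEq,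
      w.injEq, z.injEq] <;> omega

def kellyOrder (n : ℕ) (t : Fin 4) : LinOrdOn (KElt n) :=
  .ofInjective (kellyKey n t) (kellyKey_injective t)

def kellyFormula (q : Fin 4 → Prop) : Prop :=
  q 2 ∧ (q 3 ∧ (q 0 ∨ q 1) ∨ ¬q 3 ∧ q 0 ∧ q 1)

theorem isBooleanRealizer_kellyOrder : IsBooleanRealizer (kellyOrder n) kellyFormula := by
  intro x y hxy
  simp only [lt_iff_kellyLt, kellyFormula, kellyOrder, LinOrdOn.ofInjective, hxy, ne_eq,
    not_false_eq_true, and_true]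
  cases x <;> cases y <;>
    simp only [KellyLt, kellyKey, ne_eq, a.injEq, b.injEq, w.injEq, z.injEq, Fin.lt_def,
      Fin.ext_iff] at hxy ⊢ <;>
    grind

end KElt

theorem boolDim_kelly_le_four_general (n : ℕ) :
    boolDim (KElt n) ≤ 4 :=
  boolDim_le_of_isBooleanRealizer (by norm_num) KElt.isBooleanRealizer_kellyOrder

/-- The Boolean dimension of the Kelly poset `K_n` is at most `4` for `n ≥ 3`. -/
theorem boolDim_kelly_le_four (n : ℕ) (hn : 3 ≤ n) :
    boolDim (KElt n) ≤ 4 :=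
  boolDim_kelly_le_four_general n
end

section
/- Let P be a finite poset that is the disjoint sum of posets C_1, C_2, …, C_t for some t ≥ 2 (the ground set of P is the disjoint union of the ground sets of the C_i, the order of P restricted to each C_i is the order of C_i, and any two elements lying in different parts are incomparable in P). Then ldim(P) ≤ 2 + max{ldim(C_i) : 1 ≤ i ≤ t}. -/
/-!
Take optimal local realizers of the parts and carry each ple into the sum: they witness every
comparability and reverse every incomparable pair inside a part, and an element of `C_i` lies in
at most `ldim(C_i)` of them. Elements of different parts are incomparable, so such pairs must be
reversed in both directions; two linear extensions of the whole sum (Szpilrajn) of the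
lexicographic orders listing the parts in increasing, respectively decreasing, order of index do
this, and they add exactly `2` to every multiplicity.
-/

/-- A partial linear extension (ple) of a poset `α`: a set `dom` together with a
linear order `rel` on `dom` extending the restriction of the partial order to `dom`. -/
structure PLE (α : Type*) [PartialOrder α] where
  dom : Set α
  rel : α → α → Prop
  refl : ∀ x ∈ dom, rel x x
  antisymm : ∀ x ∈ dom, ∀ y ∈ dom, rel x y → rel y x → x = y
  trans : ∀ x ∈ dom, ∀ y ∈ dom, ∀ z ∈ dom, rel x y → rel y z → rel x z
  total : ∀ x ∈ dom, ∀ y ∈ dom, rel x y ∨ rel y x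
  extends_le : ∀ x ∈ dom, ∀ y ∈ dom, x ≤ y → rel x y

/-- `μ(u, 𝓛)`: the number of members of the family `𝓛` whose domain contains `u`. -/
noncomputable def mu {α : Type*} [PartialOrder α] {m : ℕ} (L : Fin m → PLE α) (u : α) : ℕ :=
  Set.ncard {i : Fin m | u ∈ (L i).dom}

/-- A family of ple's is a local realizer when every strict comparability is witnessed
and every incomparable pair is reversed by some member. -/
def IsLocalRealizer {α : Type*} [PartialOrder α] {m : ℕ} (L : Fin m → PLE α) : Prop :=
  (∀ x y : α, x < y → ∃ i, x ∈ (L i).dom ∧ y ∈ (L i).dom ∧ (L i).rel x y) ∧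
  (∀ x y : α, ¬ x ≤ y → ¬ y ≤ x → ∃ i, x ∈ (L i).dom ∧ y ∈ (L i).dom ∧ (L i).rel y x)

/-- The local dimension: the least positive `d` admitting a local realizer `𝓛`
with `μ(u,𝓛) ≤ d` for every `u`. -/
noncomputable def localDim (α : Type*) [PartialOrder α] : ℕ :=
  sInf {d : ℕ | 0 < d ∧ ∃ m : ℕ, ∃ L : Fin m → PLE α,
    IsLocalRealizer L ∧ ∀ u : α, mu L u ≤ d}

section Poset

variable {α : Type*} [PartialOrder α]

namespace PLE

def Precedes (p : PLE α) (x y : α) : Prop :=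
  x ∈ p.dom ∧ y ∈ p.dom ∧ p.rel x y

def pair (a b : α) (h : ¬ b < a) : PLE α where
  dom := {a, b}
  rel u v := u = v ∨ (u = a ∧ v = b)
  refl _ _ := Or.inl rfl
  antisymm := by
    rintro u - v - (rfl | ⟨rfl, rfl⟩) (h' | ⟨rfl, -⟩) <;> first | rfl | exact h'.symm
  trans := by
    rintro u - v - w - (rfl | ⟨rfl, rfl⟩) hvw
    · exact hvw
    · exact Or.inr ⟨rfl, hvw.elim Eq.symm And.right⟩
  total := by
    rintro u (rfl | rfl) v (rfl | rfl) <;> simp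
  extends_le := by
    rintro u (rfl | rfl) v (rfl | rfl) huv
    · exact Or.inl rfl
    · exact Or.inr ⟨rfl, rfl⟩
    · exact Or.inl (huv.eq_of_not_lt h)
    · exact Or.inl rfl

theorem pair_precedes (a b : α) (h : ¬ b < a) : (pair a b h).Precedes a b :=
  ⟨Or.inl rfl, Or.inr rfl, Or.inr ⟨rfl, rfl⟩⟩

variable {γ : Type*} [PartialOrder γ]

def map (f : α ↪o γ) (p : PLE α) : PLE γ where
  dom := f '' p.dom
  rel a b := ∃ x ∈ p.dom, ∃ y ∈ p.dom, p.rel x y ∧ f x = a ∧ f y = b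
  refl := by
    rintro _ ⟨x, hx, rfl⟩
    exact ⟨x, hx, x, hx, p.refl x hx, rfl, rfl⟩
  antisymm := by
    rintro _ - _ - ⟨x, hx, y, hy, hxy, rfl, rfl⟩ ⟨y', -, x', -, hyx, hy', hx'⟩
    rw [f.injective hy', f.injective hx'] at hyx
    rw [p.antisymm x hx y hy hxy hyx]
  trans := by
    rintro _ - _ - _ - ⟨x, hx, y, hy, hxy, rfl, rfl⟩ ⟨y', -, z, hz, hyz, hy', rfl⟩
    rw [f.injective hy'] at hyz
    exact ⟨x, hx, z, hz, p.trans x hx y hy z hz hxy hyz, rfl, rfl⟩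
  total := by
    rintro _ ⟨x, hx, rfl⟩ _ ⟨y, hy, rfl⟩
    exact (p.total x hx y hy).imp (fun h => ⟨x, hx, y, hy, h, rfl, rfl⟩)
      (fun h => ⟨y, hy, x, hx, h, rfl, rfl⟩)
  extends_le := by
    rintro _ ⟨x, hx, rfl⟩ _ ⟨y, hy, rfl⟩ hxy
    exact ⟨x, hx, y, hy, p.extends_le x hx y hy (f.le_iff_le.mp hxy), rfl, rfl⟩

theorem Precedes.map {p : PLE α} {x y : α} (h : p.Precedes x y) (f : α ↪o γ) :
    (p.map f).Precedes (f x) (f y) :=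
  ⟨⟨x, h.1, rfl⟩, ⟨y, h.2.1, rfl⟩, ⟨x, h.1, y, h.2.1, h.2.2, rfl, rfl⟩⟩

def ofIsLinearOrder (s : α → α → Prop) [IsLinearOrder α s] (hs : ∀ a b, a ≤ b → s a b) :
    PLE α where
  dom := Set.univ
  rel := s
  refl x _ := refl_of s x
  antisymm _ _ _ _ := antisymm_of s
  trans _ _ _ _ _ _ := trans_of s
  total x _ y _ := total_of s x y
  extends_le x _ y _ := hs x y

theorem exists_precedes_of_le (r : α → α → Prop) [IsPartialOrder α r]
    (hr : ∀ a b, a ≤ b → r a b) : ∃ p : PLE α, ∀ a b, r a b → p.Precedes a b := by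
  obtain ⟨s, hs, hrs⟩ := extend_partialOrder r
  exact ⟨ofIsLinearOrder s fun a b h => hrs a b (hr a b h),
    fun a b hab => ⟨trivial, trivial, hrs a b hab⟩⟩

end PLE

def IsLocalRealizerFamily {ι : Type*} (F : ι → PLE α) : Prop :=
  (∀ x y : α, x < y → ∃ k, (F k).Precedes x y) ∧
  (∀ x y : α, ¬ x ≤ y → ¬ y ≤ x → ∃ k, (F k).Precedes y x)

theorem mu_le {m : ℕ} (L : Fin m → PLE α) (u : α) : mu L u ≤ m :=
  (Set.ncard_le_card _).trans_eq (Nat.card_eq_fintype_card.trans (Fintype.card_fin m))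

theorem IsLocalRealizerFamily.exists_fin {ι : Type*} [Fintype ι] {F : ι → PLE α}
    (hF : IsLocalRealizerFamily F) : ∃ m, ∃ L : Fin m → PLE α,
      IsLocalRealizer L ∧ ∀ u, mu L u = {k | u ∈ (F k).dom}.ncard := by
  set e := Fintype.equivFin ι
  refine ⟨_, F ∘ e.symm, ⟨fun x y hxy => ?_, fun x y hxy hyx => ?_⟩, fun u => ?_⟩
  · obtain ⟨k, hk⟩ := hF.1 x y hxy
    exact ⟨e k, by simpa [PLE.Precedes] using hk⟩
  · obtain ⟨k, hy, hx, hyx⟩ := hF.2 x y hxy hyx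
    exact ⟨e k, by simpa using hx, by simpa using hy, by simpa using hyx⟩
  · exact Set.ncard_preimage_of_injective_subset_range (s := {k | u ∈ (F k).dom})
      e.symm.injective (by simp)

theorem localDim_le_of_isLocalRealizerFamily {ι : Type*} [Fintype ι] {F : ι → PLE α}
    (hF : IsLocalRealizerFamily F) {d : ℕ} (hd : 0 < d)
    (hμ : ∀ u, {k | u ∈ (F k).dom}.ncard ≤ d) : localDim α ≤ d := by
  obtain ⟨m, L, hL, hLμ⟩ := hF.exists_fin
  exact Nat.sInf_le ⟨hd, m, L, hL, fun u => (hLμ u).trans_le (hμ u)⟩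

/-- The infimum defining `localDim` is attained as soon as one local realizer exists, and the
two-element ples on the pairs of a finite poset form one. -/
theorem exists_isLocalRealizer_mu_le_localDim [Finite α] :
    ∃ m, ∃ L : Fin m → PLE α, IsLocalRealizer L ∧ ∀ u, mu L u ≤ localDim α := by
  classical
  have : Fintype α := Fintype.ofFinite α
  let F : {p : α × α // ¬ p.2 < p.1} → PLE α := fun p => PLE.pair p.1.1 p.1.2 p.2
  have hF : IsLocalRealizerFamily F :=
    ⟨fun x y hxy => ⟨⟨(x, y), hxy.asymm⟩, PLE.pair_precedes x y _⟩,
      fun x y hxy _ => ⟨⟨(y, x), fun h => hxy h.le⟩, PLE.pair_precedes y x _⟩⟩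
  obtain ⟨m, L, hL, -⟩ := hF.exists_fin
  have hne : {d | 0 < d ∧ ∃ m, ∃ L : Fin m → PLE α, IsLocalRealizer L ∧ ∀ u, mu L u ≤ d}.Nonempty :=
    ⟨m + 1, m.succ_pos, m, L, hL, fun u => (mu_le L u).trans m.le_succ⟩
  exact (Nat.sInf_mem hne).2

end Poset

section Sigma

variable {ι : Type*} {β : ι → Type*} [∀ i, PartialOrder (β i)]

def Sigma.mkOrderEmbedding (i : ι) : β i ↪o Σ i, β i :=
  OrderEmbedding.ofMapLEIff (Sigma.mk i) fun _ _ => Sigma.mk_le_mk_iff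

def sigmaFamily (A B : PLE (Σ i, β i)) {m : ι → ℕ} (L : ∀ i, Fin (m i) → PLE (β i)) :
    Fin 2 ⊕ (Σ i, Fin (m i)) → PLE (Σ i, β i) :=
  Sum.elim ![A, B] fun k => (L k.1 k.2).map (Sigma.mkOrderEmbedding k.1)

theorem Sigma.lex_of_le (r : ι → ι → Prop) {a b : Σ i, β i} (h : a ≤ b) :
    Sigma.Lex r (fun _ => (· ≤ ·)) a b := by
  obtain ⟨i, x, y, hxy⟩ := h
  exact .right x y hxy

theorem isLocalRealizerFamily_sigmaFamily [LinearOrder ι] {A B : PLE (Σ i, β i)}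
    (hA : ∀ a b : Σ i, β i, a.1 < b.1 → A.Precedes a b)
    (hB : ∀ a b : Σ i, β i, a.1 < b.1 → B.Precedes b a)
    {m : ι → ℕ} {L : ∀ i, Fin (m i) → PLE (β i)} (hL : ∀ i, IsLocalRealizer (L i)) :
    IsLocalRealizerFamily (sigmaFamily A B L) := by
  constructor
  · rintro ⟨i, x⟩ ⟨j, y⟩ hxy
    obtain ⟨i, x, y, -⟩ := hxy.le
    obtain ⟨k, hk⟩ := (hL i).1 x y (Sigma.mk_lt_mk_iff.mp hxy)
    exact ⟨.inr ⟨i, k⟩, PLE.Precedes.map hk (Sigma.mkOrderEmbedding i)⟩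
  · rintro ⟨i, x⟩ ⟨j, y⟩ hxy hyx
    rcases lt_trichotomy i j with hij | rfl | hji
    · exact ⟨.inl 1, hB ⟨i, x⟩ ⟨j, y⟩ hij⟩
    · obtain ⟨k, hx, hy, hyx⟩ :=
        (hL i).2 x y (mt Sigma.mk_le_mk_iff.mpr hxy) (mt Sigma.mk_le_mk_iff.mpr hyx)
      exact ⟨.inr ⟨i, k⟩, PLE.Precedes.map ⟨hy, hx, hyx⟩ (Sigma.mkOrderEmbedding i)⟩
    · exact ⟨.inl 0, hA ⟨j, y⟩ ⟨i, x⟩ hji⟩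

theorem ncard_sigmaFamily_dom_le (A B : PLE (Σ i, β i)) {m : ι → ℕ}
    (L : ∀ i, Fin (m i) → PLE (β i)) (i : ι) (x : β i) :
    {k | ⟨i, x⟩ ∈ (sigmaFamily A B L k).dom}.ncard ≤ 2 + mu (L i) x := by
  have hsub : {k | ⟨i, x⟩ ∈ (sigmaFamily A B L k).dom} ⊆
      Set.range Sum.inl ∪ Sum.inr '' (Sigma.mk i '' {k | x ∈ (L i k).dom}) := by
    rintro (v | ⟨j, k⟩) hk
    · exact .inl ⟨v, rfl⟩
    · obtain ⟨y, hy, hyx⟩ := hk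
      obtain ⟨rfl, hyx⟩ := Sigma.mk.inj_iff.mp hyx
      obtain rfl := eq_of_heq hyx
      exact .inr ⟨⟨j, k⟩, ⟨k, hy, rfl⟩, rfl⟩
  calc _ ≤ _ := Set.ncard_le_ncard hsub
    _ ≤ (Set.range (Sum.inl : Fin 2 → _)).ncard + _ := Set.ncard_union_le _ _
    _ = 2 + mu (L i) x := by
      rw [Set.ncard_range_of_injective Sum.inl_injective, Set.ncard_image_of_injective _
        Sum.inr_injective, Set.ncard_image_of_injective _ sigma_mk_injective, Nat.card_fin]
      rfl

theorem localDim_sigma_le [Fintype ι] [LinearOrder ι] {m : ι → ℕ}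
    {L : ∀ i, Fin (m i) → PLE (β i)} (hL : ∀ i, IsLocalRealizer (L i)) {d : ℕ}
    (hd : ∀ i u, mu (L i) u ≤ d) : localDim (Σ i, β i) ≤ 2 + d := by
  have : IsPartialOrder _ (Sigma.Lex (α := β) (· < ·) fun _ => (· ≤ ·)) := {}
  have : IsPartialOrder _ (Sigma.Lex (α := β) (· > ·) fun _ => (· ≤ ·)) := {}
  obtain ⟨A, hA⟩ := PLE.exists_precedes_of_le _ fun _ _ => Sigma.lex_of_le (· < ·) (β := β)
  obtain ⟨B, hB⟩ := PLE.exists_precedes_of_le _ fun _ _ => Sigma.lex_of_le (· > ·) (β := β)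
  refine localDim_le_of_isLocalRealizerFamily
    (isLocalRealizerFamily_sigmaFamily (fun a b h => hA a b (.left a.2 b.2 h))
      (fun a b h => hB b a (.left b.2 a.2 h)) hL) (by omega) ?_
  rintro ⟨i, x⟩
  exact (ncard_sigmaFamily_dom_le A B L i x).trans (Nat.add_le_add_left (hd i x) 2)

end Sigma

theorem localDim_disjoint_sum_general (t : ℕ) (β : Fin t → Type*)
    [∀ i, Fintype (β i)] [∀ i, PartialOrder (β i)] :
    localDim (Σ i, β i) ≤ 2 + Finset.univ.sup (fun i => localDim (β i)) := by
  choose m L hL hμ using fun i => exists_isLocalRealizer_mu_le_localDim (α := β i)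
  exact localDim_sigma_le hL fun i u => (hμ i u).trans
    (Finset.le_sup (f := fun i => localDim (β i)) (Finset.mem_univ i))

/-- The local dimension of a disjoint sum of `t ≥ 2` posets is at most `2` plus the
maximum of the local dimensions of the parts. (Elements of different parts are
incomparable in `Σ i, β i`.) -/
theorem localDim_disjoint_sum (t : ℕ) (ht : 2 ≤ t) (β : Fin t → Type*)
    [∀ i, Fintype (β i)] [∀ i, PartialOrder (β i)] :
    localDim (Σ i, β i) ≤ 2 + Finset.univ.sup (fun i => localDim (β i)) :=
  localDim_disjoint_sum_general t β
end
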